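/- Let g be a density satisfying (SC) with constants 1 < g₀ ≤ g⁰, let G(t) = ∫₀ᵗ g(s) ds, let N ≥ 1, and for ξ ∈ ℝ^N define a(ξ) = (g(‖ξ‖)/‖ξ‖)·ξ for ξ ≠ 0 and a(0) = 0. Then there exists a constant c > 0 depending only on g₀ and g⁰ such that for all ξ, η ∈ ℝ^N with ‖ξ − η‖ > 2‖ξ‖ one has ⟨a(ξ) − a(η), ξ − η⟩ ≥ c·G(‖ξ − η‖). -/

import Mathlib

/-!
Write `x = ‖ξ‖`, `y = ‖η‖`, `r = ‖ξ - η‖ > 2x`, so that `r/2 < y < 3r/2`. By (SC), `g` is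
nondecreasing and `u ↦ g u / u ^ (p - 1)`, resp. `u ↦ g u / u ^ (q - 1)`, is nondecreasing,
resp. nonincreasing; in particular `2 ^ (p - 1) g(s) ≤ g(2s) ≤ 2 ^ (q - 1) g(s)`.
If `y² - x² ≤ r²`, the expansion of the inner product in `r², x², y²` has a nonnegative
`ξ`-term and an `η`-term of size at least `g(y) r / 3`. Otherwise `y - x ≥ r / 2`, hence
`y ≥ 2x`, and the monotonicity bound `⟪a ξ - a η, ξ - η⟫ ≥ (g y - g x)(y - x)` gives at least
`(1 - 2 ^ (1 - p)) g(y) r / 2`. Either way the inner product dominates `r g(r/2)`, which in turn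
dominates `G(r) ≤ r g(r) ≤ 2 ^ (q - 1) r g(r/2)`.
-/

/-- A density `g` (with derivative `g'` on `(0,∞)`) satisfying the structural
condition (SC) with constants `1 < g₀ ≤ g⁰`. -/
def IsDensitySC (g g' : ℝ → ℝ) (p q : ℝ) : Prop :=
  g 0 = 0 ∧ (∀ t > (0:ℝ), 0 < g t) ∧ (∀ t > (0:ℝ), HasDerivAt g (g' t) t) ∧
  ContinuousOn g' (Set.Ioi 0) ∧
  (∀ t > (0:ℝ), p - 1 ≤ t * g' t / g t ∧ t * g' t / g t ≤ q - 1)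

open Real Set
open scoped InnerProductSpace

section RpowWeighted

variable {g g' : ℝ → ℝ} {e : ℝ}

lemma hasDerivAt_mul_rpow_neg {u : ℝ} (hu : 0 < u) (hg : HasDerivAt g (g' u) u) :
    HasDerivAt (fun v => g v * v ^ (-e)) (u ^ (-e - 1) * (u * g' u - e * g u)) u := by
  have hsplit : u ^ (-e) = u * u ^ (-e - 1) := by
    simpa only [rpow_one, add_sub_cancel] using rpow_add hu 1 (-e - 1)
  exact (hg.mul (hasDerivAt_rpow_const (p := -e) (Or.inl hu.ne'))).congr_deriv
    (by rw [hsplit]; ring)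

lemma monotoneOn_mul_rpow_neg (hder : ∀ u > 0, HasDerivAt g (g' u) u)
    (hle : ∀ u > 0, e * g u ≤ u * g' u) :
    MonotoneOn (fun u => g u * u ^ (-e)) (Ioi 0) := by
  refine monotoneOn_of_hasDerivWithinAt_nonneg (convex_Ioi 0)
    (f' := fun u => u ^ (-e - 1) * (u * g' u - e * g u))
    (fun u hu => (hasDerivAt_mul_rpow_neg hu (hder u hu)).continuousAt.continuousWithinAt)
    (fun u hu => ?_) (fun u hu => ?_) <;> rw [interior_Ioi] at hu
  · exact (hasDerivAt_mul_rpow_neg hu (hder u hu)).hasDerivWithinAt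
  · exact mul_nonneg (rpow_nonneg hu.le _) (sub_nonneg.2 (hle u hu))

lemma antitoneOn_mul_rpow_neg (hder : ∀ u > 0, HasDerivAt g (g' u) u)
    (hle : ∀ u > 0, u * g' u ≤ e * g u) :
    AntitoneOn (fun u => g u * u ^ (-e)) (Ioi 0) := by
  have hneg := monotoneOn_mul_rpow_neg (g := -g) (g' := -g') (e := e)
    (fun u hu => (hder u hu).neg) (fun u hu => by simpa using hle u hu)
  intro s hs t ht hst
  simpa using hneg hs ht hst

end RpowWeighted

section RadialField

variable {E : Type*} [NormedAddCommGroup E] [InnerProductSpace ℝ E] {g : ℝ → ℝ}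

/-- The field `a` of the statement; the convention `0 / 0 = 0` gives `a 0 = 0`, as there. -/
noncomputable def radialField (g : ℝ → ℝ) (ξ : E) : E := (g ‖ξ‖ / ‖ξ‖) • ξ

lemma inner_radialField_self (g : ℝ → ℝ) (ξ : E) :
    ⟪radialField g ξ, ξ⟫_ℝ = g ‖ξ‖ * ‖ξ‖ := by
  rw [radialField, real_inner_smul_left, real_inner_self_eq_norm_sq]
  rcases eq_or_ne ‖ξ‖ 0 with hξ | hξ
  · simp [hξ]
  · field_simp

lemma norm_radialField_le {ξ : E} (hg : 0 ≤ g ‖ξ‖) : ‖radialField g ξ‖ ≤ g ‖ξ‖ := by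
  rw [radialField, norm_smul, norm_div, norm_norm, Real.norm_of_nonneg hg]
  rcases eq_or_ne ‖ξ‖ 0 with hξ | hξ
  · simpa [hξ] using hg
  · rw [div_mul_cancel₀ _ hξ]

lemma sub_mul_sub_le_inner_radialField {ξ η : E} (hξ : 0 ≤ g ‖ξ‖) (hη : 0 ≤ g ‖η‖) :
    (g ‖ξ‖ - g ‖η‖) * (‖ξ‖ - ‖η‖) ≤ ⟪radialField g ξ - radialField g η, ξ - η⟫_ℝ := by
  have hξη := (real_inner_le_norm (radialField g ξ) η).trans
    (mul_le_mul_of_nonneg_right (norm_radialField_le hξ) (norm_nonneg η))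
  have hηξ := (real_inner_le_norm (radialField g η) ξ).trans
    (mul_le_mul_of_nonneg_right (norm_radialField_le hη) (norm_nonneg ξ))
  rw [inner_sub_left, inner_sub_right, inner_sub_right, inner_radialField_self,
    inner_radialField_self]
  linarith

lemma inner_radialField_sub_eq (g : ℝ → ℝ) (ξ η : E) :
    ⟪radialField g ξ - radialField g η, ξ - η⟫_ℝ =
      (g ‖ξ‖ / ‖ξ‖ * (‖ξ - η‖ ^ 2 + ‖ξ‖ ^ 2 - ‖η‖ ^ 2) +
        g ‖η‖ / ‖η‖ * (‖ξ - η‖ ^ 2 + ‖η‖ ^ 2 - ‖ξ‖ ^ 2)) / 2 := by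
  rw [norm_sub_sq_real]
  simp only [radialField, inner_sub_left, inner_sub_right, real_inner_smul_left,
    real_inner_self_eq_norm_sq, real_inner_comm ξ η]
  ring

lemma div_three_mul_le_inner_radialField {ξ η : E} (hξ : 0 ≤ g ‖ξ‖) (hη : 0 ≤ g ‖η‖)
    (hξη : 2 * ‖ξ‖ < ‖ξ - η‖) (hsq : ‖η‖ ^ 2 - ‖ξ‖ ^ 2 ≤ ‖ξ - η‖ ^ 2) :
    ‖ξ - η‖ * g ‖η‖ / 3 ≤ ⟪radialField g ξ - radialField g η, ξ - η⟫_ℝ := by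
  have hexpand := inner_radialField_sub_eq g ξ η
  have hr_le := norm_sub_le ξ η
  have hy_le := norm_le_norm_add_norm_sub ξ η
  have hx : 0 ≤ ‖ξ‖ := norm_nonneg ξ
  set x := ‖ξ‖
  set y := ‖η‖
  set r := ‖ξ - η‖
  have hy : 0 < y := by linarith
  have hξ_term : 0 ≤ g x / x * (r ^ 2 + x ^ 2 - y ^ 2) :=
    mul_nonneg (div_nonneg hξ hx) (by linarith)
  have hη_term : 2 / 3 * (r * g y) ≤ g y / y * (r ^ 2 + y ^ 2 - x ^ 2) := by
    have hr_y : 2 / 3 ≤ r / y := by rw [le_div_iff₀ hy]; linarith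
    calc 2 / 3 * (r * g y) ≤ r / y * (r * g y) :=
          mul_le_mul_of_nonneg_right hr_y (mul_nonneg (by linarith) hη)
      _ = g y / y * r ^ 2 := by ring
      _ ≤ g y / y * (r ^ 2 + y ^ 2 - x ^ 2) := by gcongr; nlinarith
  linarith

end RadialField

lemma inv_two_rpow_lt_one {p : ℝ} (hp : 1 < p) : (2 ^ (p - 1) : ℝ)⁻¹ < 1 :=
  inv_lt_one_of_one_lt₀ (one_lt_rpow one_lt_two (by linarith))

namespace IsDensitySC

variable {E : Type*} [NormedAddCommGroup E] [InnerProductSpace ℝ E] {g g' : ℝ → ℝ} {p q : ℝ}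

lemma nonneg (h : IsDensitySC g g' p q) {t : ℝ} (ht : 0 ≤ t) : 0 ≤ g t := by
  rcases ht.eq_or_lt with rfl | ht
  · exact h.1.ge
  · exact (h.2.1 t ht).le

lemma rpow_mul_le (h : IsDensitySC g g' p q) {s l : ℝ} (hs : 0 < s) (hl : 1 ≤ l) :
    l ^ (p - 1) * g s ≤ g (l * s) := by
  obtain ⟨-, hpos, hder, -, hsc⟩ := h
  have hl0 : 0 < l := one_pos.trans_le hl
  have hmono := monotoneOn_mul_rpow_neg (e := p - 1) hder
    fun u hu => (le_div_iff₀ (hpos u hu)).1 (hsc u hu).1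
  have key := hmono hs (mul_pos hl0 hs) (le_mul_of_one_le_left hs.le hl)
  simp only [mul_rpow hl0.le hs.le, rpow_neg hl0.le, ← mul_assoc] at key
  have key' := le_of_mul_le_mul_right key (rpow_pos_of_pos hs _)
  rw [← div_eq_mul_inv, le_div_iff₀ (rpow_pos_of_pos hl0 _)] at key'
  rwa [mul_comm (l ^ (p - 1))]

lemma le_rpow_mul (h : IsDensitySC g g' p q) {s l : ℝ} (hs : 0 < s) (hl : 1 ≤ l) :
    g (l * s) ≤ l ^ (q - 1) * g s := by
  obtain ⟨-, hpos, hder, -, hsc⟩ := h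
  have hl0 : 0 < l := one_pos.trans_le hl
  have hanti := antitoneOn_mul_rpow_neg (e := q - 1) hder
    fun u hu => (div_le_iff₀ (hpos u hu)).1 (hsc u hu).2
  have key := hanti hs (mul_pos hl0 hs) (le_mul_of_one_le_left hs.le hl)
  simp only [mul_rpow hl0.le hs.le, rpow_neg hl0.le, ← mul_assoc] at key
  have key' := le_of_mul_le_mul_right key (rpow_pos_of_pos hs _)
  rw [← div_eq_mul_inv, div_le_iff₀ (rpow_pos_of_pos hl0 _)] at key'
  rwa [mul_comm (l ^ (q - 1))]

lemma monotoneOn (h : IsDensitySC g g' p q) (hp : 1 ≤ p) : MonotoneOn g (Ici 0) := by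
  intro s hs t ht hst
  rcases (mem_Ici.1 hs).eq_or_lt with rfl | hs0
  · rw [h.1]
    exact h.nonneg ht
  have hts : 1 ≤ t / s := (one_le_div hs0).2 hst
  calc g s ≤ (t / s) ^ (p - 1) * g s :=
        le_mul_of_one_le_left (h.nonneg hs) (one_le_rpow hts (by linarith))
    _ ≤ g (t / s * s) := h.rpow_mul_le hs0 hts
    _ = g t := by rw [div_mul_cancel₀ t hs0.ne']

lemma integral_le_mul (h : IsDensitySC g g' p q) (hp : 1 ≤ p) {r : ℝ} (hr : 0 ≤ r) :
    ∫ s in (0 : ℝ)..r, g s ≤ r * g r := by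
  have hmono := h.monotoneOn hp
  have hint : IntervalIntegrable g MeasureTheory.volume 0 r :=
    (hmono.mono (by rw [uIcc_of_le hr]; exact Icc_subset_Ici_self)).intervalIntegrable
  calc ∫ s in (0 : ℝ)..r, g s ≤ ∫ _ in (0 : ℝ)..r, g r :=
        intervalIntegral.integral_mono_on hr hint intervalIntegrable_const
          fun u hu => hmono hu.1 (hr : r ∈ Ici 0) hu.2
    _ = r * g r := by simp

lemma apply_le_inv_rpow_mul_of_two_mul_le (h : IsDensitySC g g' p q) (hp : 1 ≤ p) {x y : ℝ}
    (hx : 0 ≤ x) (hxy : 2 * x ≤ y) (hy : 0 < y) : g x ≤ (2 ^ (p - 1))⁻¹ * g y := by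
  rw [le_inv_mul_iff₀ (rpow_pos_of_pos two_pos _)]
  calc 2 ^ (p - 1) * g x ≤ 2 ^ (p - 1) * g (y / 2) :=
        mul_le_mul_of_nonneg_left (h.monotoneOn hp hx (mem_Ici.2 (by linarith)) (by linarith))
          (rpow_nonneg zero_le_two _)
    _ ≤ g (2 * (y / 2)) := h.rpow_mul_le (half_pos hy) one_le_two
    _ = g y := by rw [mul_div_cancel₀ y two_ne_zero]

lemma mul_le_inner_radialField_of_lt_sq_sub_sq (h : IsDensitySC g g' p q) (hp : 1 ≤ p)
    {ξ η : E} (hξη : 2 * ‖ξ‖ < ‖ξ - η‖) (hsq : ‖ξ - η‖ ^ 2 < ‖η‖ ^ 2 - ‖ξ‖ ^ 2) :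
    (1 - (2 ^ (p - 1))⁻¹) * g ‖η‖ * (‖ξ - η‖ / 2) ≤
      ⟪radialField g ξ - radialField g η, ξ - η⟫_ℝ := by
  have hmonotone := sub_mul_sub_le_inner_radialField (g := g) (h.nonneg (norm_nonneg ξ))
    (h.nonneg (norm_nonneg η))
  have hr_le := norm_sub_le ξ η
  have hy_le := norm_le_norm_add_norm_sub ξ η
  have hx : 0 ≤ ‖ξ‖ := norm_nonneg ξ
  have hy : 0 ≤ ‖η‖ := norm_nonneg η
  set x := ‖ξ‖
  set y := ‖η‖
  set r := ‖ξ - η‖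
  have hyx : r / 2 ≤ y - x := by nlinarith
  have hgx := h.apply_le_inv_rpow_mul_of_two_mul_le hp hx (y := y) (by linarith) (by linarith)
  have hgxy : g x ≤ g y := h.monotoneOn hp hx hy (by linarith)
  calc (1 - (2 ^ (p - 1))⁻¹) * g y * (r / 2) ≤ (g y - g x) * (y - x) :=
        mul_le_mul (by linarith) hyx (by linarith) (sub_nonneg.2 hgxy)
    _ = (g x - g y) * (x - y) := by ring
    _ ≤ _ := hmonotone

lemma mul_le_inner_radialField (h : IsDensitySC g g' p q) (hp : 1 < p) {ξ η : E}
    (hξη : 2 * ‖ξ‖ < ‖ξ - η‖) :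
    (1 - (2 ^ (p - 1))⁻¹) / 3 * (‖ξ - η‖ * g (‖ξ - η‖ / 2)) ≤
      ⟪radialField g ξ - radialField g η, ξ - η⟫_ℝ := by
  have hr : 0 < ‖ξ - η‖ := (mul_nonneg zero_le_two (norm_nonneg ξ)).trans_lt hξη
  have hκ : 0 < 1 - (2 ^ (p - 1) : ℝ)⁻¹ := sub_pos.2 (inv_two_rpow_lt_one hp)
  have hκ_le : 1 - (2 ^ (p - 1) : ℝ)⁻¹ ≤ 1 :=
    sub_le_self _ (inv_nonneg.2 (rpow_nonneg zero_le_two _))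
  have hg_half : g (‖ξ - η‖ / 2) ≤ g ‖η‖ := h.monotoneOn hp.le (mem_Ici.2 (half_pos hr).le)
    (mem_Ici.2 (norm_nonneg η)) (by linarith [norm_sub_le ξ η])
  have hr_g : ‖ξ - η‖ * g (‖ξ - η‖ / 2) ≤ ‖ξ - η‖ * g ‖η‖ :=
    mul_le_mul_of_nonneg_left hg_half hr.le
  have hr_g_nonneg : 0 ≤ ‖ξ - η‖ * g (‖ξ - η‖ / 2) := mul_nonneg hr.le (h.nonneg (half_pos hr).le)
  rcases le_or_gt (‖η‖ ^ 2 - ‖ξ‖ ^ 2) (‖ξ - η‖ ^ 2) with hsq | hsq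
  · have := div_three_mul_le_inner_radialField (h.nonneg (norm_nonneg ξ))
      (h.nonneg (norm_nonneg η)) hξη hsq
    nlinarith
  · have := h.mul_le_inner_radialField_of_lt_sq_sub_sq hp.le hξη hsq
    nlinarith

end IsDensitySC

theorem stmt_17_general (g₀ gS : ℝ) (hg₀ : 1 < g₀) :
    ∃ c : ℝ, 0 < c ∧ ∀ g g' : ℝ → ℝ, IsDensitySC g g' g₀ gS →
      ∀ N : ℕ, 1 ≤ N → ∀ ξ η : EuclideanSpace ℝ (Fin N),
        2 * ‖ξ‖ < ‖ξ - η‖ →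
        c * ∫ s in (0:ℝ)..‖ξ - η‖, g s ≤
          (inner ℝ ((g ‖ξ‖ / ‖ξ‖) • ξ - (g ‖η‖ / ‖η‖) • η) (ξ - η) : ℝ) := by
  have hκ : 0 < 1 - (2 ^ (g₀ - 1) : ℝ)⁻¹ := sub_pos.2 (inv_two_rpow_lt_one hg₀)
  refine ⟨(1 - (2 ^ (g₀ - 1))⁻¹) / 3 / 2 ^ (gS - 1), by positivity, ?_⟩
  intro g g' h N _ ξ η hξη
  have hr : 0 < ‖ξ - η‖ := (mul_nonneg zero_le_two (norm_nonneg ξ)).trans_lt hξη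
  have hdoubling : g ‖ξ - η‖ ≤ 2 ^ (gS - 1) * g (‖ξ - η‖ / 2) := by
    simpa only [mul_div_cancel₀ _ (two_ne_zero' ℝ)] using h.le_rpow_mul (half_pos hr) one_le_two
  calc _ ≤ (1 - (2 ^ (g₀ - 1))⁻¹) / 3 / 2 ^ (gS - 1) * (‖ξ - η‖ * g ‖ξ - η‖) := by
        gcongr
        exact h.integral_le_mul hg₀.le hr.le
    _ ≤ (1 - (2 ^ (g₀ - 1))⁻¹) / 3 / 2 ^ (gS - 1) *
          (‖ξ - η‖ * (2 ^ (gS - 1) * g (‖ξ - η‖ / 2))) := by gcongr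
    _ = (1 - (2 ^ (g₀ - 1))⁻¹) / 3 * (‖ξ - η‖ * g (‖ξ - η‖ / 2)) := by
        field_simp
    _ ≤ _ := h.mul_le_inner_radialField hg₀ hξη

/-- there is a constant `c > 0` depending only on `g₀` and `g⁰`
such that for every density `g` satisfying (SC) with these constants, every
`N ≥ 1` and all `ξ, η ∈ ℝ^N` with `‖ξ − η‖ > 2‖ξ‖`,
`⟨a(ξ) − a(η), ξ − η⟩ ≥ c·G(‖ξ − η‖)`, where `a(ζ) = (g(‖ζ‖)/‖ζ‖)·ζ`
and `G(t) = ∫₀ᵗ g(s) ds`. -/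
theorem stmt_17 (g₀ gS : ℝ) (hg₀ : 1 < g₀) (hle : g₀ ≤ gS) :
    ∃ c : ℝ, 0 < c ∧ ∀ g g' : ℝ → ℝ, IsDensitySC g g' g₀ gS →
      ∀ N : ℕ, 1 ≤ N → ∀ ξ η : EuclideanSpace ℝ (Fin N),
        2 * ‖ξ‖ < ‖ξ - η‖ →
        c * ∫ s in (0:ℝ)..‖ξ - η‖, g s ≤
          (inner ℝ ((g ‖ξ‖ / ‖ξ‖) • ξ - (g ‖η‖ / ‖η‖) • η) (ξ - η) : ℝ) :=
  stmt_17_general g₀ gS hg₀
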